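/- arXiv:hep-th/0003034 — 3 statements merged into one kernel-verified Lean document; each statement's English description precedes it below -/
import Mathlib

section
/- Let N ≥ 1 and let c : Fin N → Fin N → Fin N → ℂ be symmetric under all permutations of its three arguments. Suppose the N×N matrix η with entries η_{αβ} = c 0 α β is invertible, and write η^{αβ} for the entries of η⁻¹. Define a bilinear multiplication * on ℂ^N on the standard basis (φ_α) by φ_α * φ_β = Σ_{μ,γ} c_{αβμ} η^{μγ} φ_γ. Then * is associative if and only if the WDVV equations hold: for all α, β, γ, δ in Fin N, Σ_{λ,μ} c_{αβλ} η^{λμ} c_{μγδ} = Σ_{λ,μ} c_{δβλ} η^{λμ} c_{μγα}. -/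
open scoped BigOperators

private lemma wdvv_perm6 {M : Type*} [AddCommMonoid M] {I : Type*} [Fintype I]
    (f : I → I → I → I → I → I → M) :
    ∑ a, ∑ d, ∑ m, ∑ α, ∑ β, ∑ l, f a d m α β l
      = ∑ α, ∑ β, ∑ d, ∑ m, ∑ a, ∑ l, f a d m α β l := by
  calc ∑ a, ∑ d, ∑ m, ∑ α, ∑ β, ∑ l, f a d m α β l
      = ∑ a, ∑ d, ∑ α, ∑ m, ∑ β, ∑ l, f a d m α β l :=
        Finset.sum_congr rfl fun _ _ => Finset.sum_congr rfl fun _ _ => Finset.sum_comm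
    _ = ∑ a, ∑ α, ∑ d, ∑ m, ∑ β, ∑ l, f a d m α β l :=
        Finset.sum_congr rfl fun _ _ => Finset.sum_comm
    _ = ∑ α, ∑ a, ∑ d, ∑ m, ∑ β, ∑ l, f a d m α β l := Finset.sum_comm
    _ = ∑ α, ∑ a, ∑ d, ∑ β, ∑ m, ∑ l, f a d m α β l :=
        Finset.sum_congr rfl fun _ _ => Finset.sum_congr rfl fun _ _ =>
          Finset.sum_congr rfl fun _ _ => Finset.sum_comm
    _ = ∑ α, ∑ a, ∑ β, ∑ d, ∑ m, ∑ l, f a d m α β l :=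
        Finset.sum_congr rfl fun _ _ => Finset.sum_congr rfl fun _ _ => Finset.sum_comm
    _ = ∑ α, ∑ β, ∑ a, ∑ d, ∑ m, ∑ l, f a d m α β l :=
        Finset.sum_congr rfl fun _ _ => Finset.sum_comm
    _ = ∑ α, ∑ β, ∑ d, ∑ a, ∑ m, ∑ l, f a d m α β l :=
        Finset.sum_congr rfl fun _ _ => Finset.sum_congr rfl fun _ _ => Finset.sum_comm
    _ = ∑ α, ∑ β, ∑ d, ∑ m, ∑ a, ∑ l, f a d m α β l :=
        Finset.sum_congr rfl fun _ _ => Finset.sum_congr rfl fun _ _ =>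
          Finset.sum_congr rfl fun _ _ => Finset.sum_comm

private lemma wdvv_perm6' {M : Type*} [AddCommMonoid M] {I : Type*} [Fintype I]
    (f : I → I → I → I → I → I → M) :
    ∑ α, ∑ a, ∑ m, ∑ β, ∑ d, ∑ l, f α a m β d l
      = ∑ α, ∑ β, ∑ d, ∑ m, ∑ a, ∑ l, f α a m β d l := by
  refine Finset.sum_congr rfl fun α _ => ?_
  calc ∑ a, ∑ m, ∑ β, ∑ d, ∑ l, f α a m β d l
      = ∑ a, ∑ β, ∑ m, ∑ d, ∑ l, f α a m β d l :=
        Finset.sum_congr rfl fun _ _ => Finset.sum_comm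
    _ = ∑ β, ∑ a, ∑ m, ∑ d, ∑ l, f α a m β d l := Finset.sum_comm
    _ = ∑ β, ∑ a, ∑ d, ∑ m, ∑ l, f α a m β d l :=
        Finset.sum_congr rfl fun _ _ => Finset.sum_congr rfl fun _ _ => Finset.sum_comm
    _ = ∑ β, ∑ d, ∑ a, ∑ m, ∑ l, f α a m β d l :=
        Finset.sum_congr rfl fun _ _ => Finset.sum_comm
    _ = ∑ β, ∑ d, ∑ m, ∑ a, ∑ l, f α a m β d l :=
        Finset.sum_congr rfl fun _ _ => Finset.sum_congr rfl fun _ _ => Finset.sum_comm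

/-- The WDVV equations for a totally symmetric tensor `c` with constant
invertible metric `η α β = c 0 α β` are exactly the associativity conditions for the
bilinear product on `ℂ^N` defined on the standard basis by
`φ_α * φ_β = Σ_{μ,γ} c α β μ * η⁻¹ μ γ • φ_γ`. -/
theorem wdvv_iff_associative (N : ℕ) (hN : 1 ≤ N)
    (c : Fin N → Fin N → Fin N → ℂ)
    (hsymm12 : ∀ α β γ, c α β γ = c β α γ)
    (hsymm23 : ∀ α β γ, c α β γ = c α γ β)
    (η : Matrix (Fin N) (Fin N) ℂ)
    (hη_def : ∀ α β, η α β = c ⟨0, hN⟩ α β)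
    (hη : IsUnit η.det)
    (mul : (Fin N → ℂ) → (Fin N → ℂ) → (Fin N → ℂ))
    (hmul : ∀ u v : Fin N → ℂ, ∀ γ : Fin N,
      mul u v γ = ∑ α, ∑ β, ∑ μ, u α * v β * (c α β μ * η⁻¹ μ γ)) :
    (∀ u v w : Fin N → ℂ, mul (mul u v) w = mul u (mul v w)) ↔
      (∀ α β γ δ : Fin N,
        (∑ l, ∑ μ, c α β l * η⁻¹ l μ * c μ γ δ)
          = ∑ l, ∑ μ, c δ β l * η⁻¹ l μ * c μ γ α) := by
  -- cancellation of η⁻¹ on the right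
  have cancel : ∀ A B : Fin N → ℂ,
      (∀ γ : Fin N, ∑ μ, A μ * η⁻¹ μ γ = ∑ μ, B μ * η⁻¹ μ γ) → A = B := by
    intro A B h
    have h1 : Matrix.vecMul A η⁻¹ = Matrix.vecMul B η⁻¹ := by
      funext γ
      simpa [Matrix.vecMul, dotProduct] using h γ
    have h2 := congrArg (fun x => Matrix.vecMul x η) h1
    simpa [Matrix.vecMul_vecMul, Matrix.nonsing_inv_mul η hη] using h2
  -- expansion of the two associations
  have E1 : ∀ u v w : Fin N → ℂ, ∀ γ : Fin N,
      mul (mul u v) w γ = ∑ α, ∑ β, ∑ d, u α * v β * w d *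
        (∑ m, (∑ a, ∑ l, c α β l * η⁻¹ l a * c a d m) * η⁻¹ m γ) := by
    intro u v w γ
    simp only [hmul, Finset.sum_mul, Finset.mul_sum]
    rw [wdvv_perm6 (fun a d m α β l =>
      u α * v β * (c α β l * η⁻¹ l a) * w d * (c a d m * η⁻¹ m γ))]
    refine Finset.sum_congr rfl fun i1 _ => Finset.sum_congr rfl fun i2 _ =>
      Finset.sum_congr rfl fun i3 _ => Finset.sum_congr rfl fun i4 _ =>
      Finset.sum_congr rfl fun i5 _ => Finset.sum_congr rfl fun i6 _ => by ring
  have E2 : ∀ u v w : Fin N → ℂ, ∀ γ : Fin N,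
      mul u (mul v w) γ = ∑ α, ∑ β, ∑ d, u α * v β * w d *
        (∑ m, (∑ a, ∑ l, c β d l * η⁻¹ l a * c α a m) * η⁻¹ m γ) := by
    intro u v w γ
    simp only [hmul, Finset.sum_mul, Finset.mul_sum]
    rw [wdvv_perm6' (fun α a m β d l =>
      u α * (v β * w d * (c β d l * η⁻¹ l a)) * (c α a m * η⁻¹ m γ))]
    refine Finset.sum_congr rfl fun i1 _ => Finset.sum_congr rfl fun i2 _ =>
      Finset.sum_congr rfl fun i3 _ => Finset.sum_congr rfl fun i4 _ =>
      Finset.sum_congr rfl fun i5 _ => Finset.sum_congr rfl fun i6 _ => by ring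
  constructor
  · intro hassoc α β γ δ
    have key : ∀ p q r : Fin N,
        (fun m => ∑ a, ∑ l, c p q l * η⁻¹ l a * c a r m)
          = (fun m => ∑ a, ∑ l, c q r l * η⁻¹ l a * c p a m) := by
      intro p q r
      apply cancel
      intro γ'
      have h := congrFun (hassoc (Pi.single p 1) (Pi.single q 1) (Pi.single r 1)) γ'
      rw [E1, E2] at h
      simpa [Pi.single_apply, ite_mul, mul_ite, one_mul, mul_one, zero_mul, mul_zero,
        Finset.sum_ite_eq', Finset.mem_univ] using h
    have hk := congrFun (key α β δ) γ
    have h1 : (∑ l, ∑ μ, c α β l * η⁻¹ l μ * c μ γ δ)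
        = ∑ a, ∑ l, c α β l * η⁻¹ l a * c a δ γ := by
      rw [Finset.sum_comm]
      exact Finset.sum_congr rfl fun a _ => Finset.sum_congr rfl fun l _ => by
        rw [hsymm23 a γ δ]
    have h2 : (∑ l, ∑ μ, c δ β l * η⁻¹ l μ * c μ γ α)
        = ∑ a, ∑ l, c β δ l * η⁻¹ l a * c α a γ := by
      rw [Finset.sum_comm]
      refine Finset.sum_congr rfl fun a _ => Finset.sum_congr rfl fun l _ => ?_
      rw [hsymm12 δ β l, ← hsymm23 a α γ, ← hsymm12 α a γ]
    rw [h1, h2]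
    exact hk
  · intro hwdvv u v w
    funext γ'
    rw [E1 u v w γ', E2 u v w γ']
    refine Finset.sum_congr rfl fun α _ => Finset.sum_congr rfl fun β _ =>
      Finset.sum_congr rfl fun d _ => ?_
    congr 1
    refine Finset.sum_congr rfl fun m _ => ?_
    congr 1
    have e1 : (∑ a, ∑ l, c α β l * η⁻¹ l a * c a d m)
        = ∑ l, ∑ a, c α β l * η⁻¹ l a * c a m d := by
      rw [Finset.sum_comm]
      exact Finset.sum_congr rfl fun l _ => Finset.sum_congr rfl fun a _ => by
        rw [hsymm23 a d m]
    have e2 : (∑ a, ∑ l, c β d l * η⁻¹ l a * c α a m)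
        = ∑ l, ∑ a, c d β l * η⁻¹ l a * c a m α := by
      rw [Finset.sum_comm]
      refine Finset.sum_congr rfl fun l _ => Finset.sum_congr rfl fun a _ => ?_
      rw [hsymm12 β d l, hsymm12 α a m, hsymm23 a α m]
    rw [e1, e2]
    exact hwdvv α β m d
end

section
/- Let R > 0 and let k : {p ∈ ℂ : |p| > R} → ℂ be holomorphic with k(p) − p → 0 as |p| → ∞. Let i, j ≥ 1 and let Ω_i, Ω_j ∈ ℂ[X] be polynomials such that k(p)^i − Ω_i(p) → 0 and k(p)^j − Ω_j(p) → 0 as |p| → ∞. Then for every r > R, ∮_{|p|=r} k(p)^i · Ω_j'(p) dp = ∮_{|p|=r} k(p)^j · Ω_i'(p) dp, where Ω' denotes the derivative of the polynomial Ω and ∮_{|p|=r} f(p) dp denotes the circle integral of f over the circle of radius r centered at 0. -/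
/-!
Write `B(u, v) = ∮ u v'`. Integration by parts makes `B` antisymmetric, so bilinearity gives,
with `fᵢ = kⁱ - Ωᵢ`,
`B(kⁱ, Ωⱼ) - B(kʲ, Ωᵢ) = B(kⁱ, kʲ) + B(Ωᵢ, Ωⱼ) - B(fᵢ, fⱼ)`.
Here `B(kⁱ, kʲ) = 0` because `kⁱ (kʲ)'` is an exact derivative, `B(Ωᵢ, Ωⱼ) = 0` by Cauchy's
theorem since its integrand is entire, and `B(fᵢ, fⱼ) = 0` because it does not depend on the radius
while, by the Cauchy estimate, `fⱼ' = o(1/|p|)` makes it tend to `0` as `r → ∞`.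
-/

open Polynomial Filter Metric Set Bornology Topology

section SphereInOpen

variable {U : Set ℂ} {c : ℂ} {r : ℝ} {u v P Q : ℂ → ℂ}

theorem circleIntegrable_mul_deriv (hU : IsOpen U) (hu : DifferentiableOn ℂ u U)
    (hv : DifferentiableOn ℂ v U) (hr : 0 ≤ r) (hsub : sphere c r ⊆ U) :
    CircleIntegrable (fun z => u z * deriv v z) c r :=
  ((hu.continuousOn.fun_mul (hv.deriv hU).continuousOn).mono hsub).circleIntegrable hr

theorem circleIntegral_mul_deriv_eq_neg (hU : IsOpen U) (hu : DifferentiableOn ℂ u U)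
    (hv : DifferentiableOn ℂ v U) (hr : 0 ≤ r) (hsub : sphere c r ⊆ U) :
    (∮ z in C(c, r), u z * deriv v z) = -∮ z in C(c, r), v z * deriv u z := by
  have hexact : (∮ z in C(c, r), (v z * deriv u z + u z * deriv v z)) = 0 := by
    refine circleIntegral.integral_eq_zero_of_hasDerivWithinAt hr (f := fun z => u z * v z)
      fun z hz => ?_
    have hdu := (hu.differentiableAt (hU.mem_nhds (hsub hz))).hasDerivAt
    have hdv := (hv.differentiableAt (hU.mem_nhds (hsub hz))).hasDerivAt
    convert (hdu.fun_mul hdv).hasDerivWithinAt using 1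
    ring
  rw [circleIntegral.integral_add (circleIntegrable_mul_deriv hU hv hu hr hsub)
    (circleIntegrable_mul_deriv hU hu hv hr hsub)] at hexact
  exact eq_neg_of_add_eq_zero_right hexact

theorem circleIntegral_pow_mul_deriv_pow_eq_zero (hU : IsOpen U) (hu : DifferentiableOn ℂ u U)
    (hr : 0 ≤ r) (hsub : sphere c r ⊆ U) (m n : ℕ) :
    (∮ z in C(c, r), u z ^ m * deriv (fun z => u z ^ n) z) = 0 := by
  cases n with
  | zero => simp [circleIntegral]
  | succ n =>
    refine circleIntegral.integral_eq_zero_of_hasDerivWithinAt hr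
      (f := fun z => ((n + 1 : ℂ) / (m + n + 1)) * u z ^ (m + n + 1)) fun z hz => ?_
    have hdu := (hu.differentiableAt (hU.mem_nhds (hsub hz))).hasDerivAt
    rw [(hdu.fun_pow (n + 1)).deriv]
    convert ((hdu.fun_pow (m + n + 1)).const_mul ((n + 1 : ℂ) / (m + n + 1))).hasDerivWithinAt
      using 1
    have : (m + n + 1 : ℂ) ≠ 0 := by exact_mod_cast Nat.succ_ne_zero (m + n)
    push_cast
    field_simp
    ring

theorem circleIntegral_mul_deriv_sub_mul_deriv (hU : IsOpen U) (hu : DifferentiableOn ℂ u U)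
    (hv : DifferentiableOn ℂ v U) (hP : DifferentiableOn ℂ P U) (hQ : DifferentiableOn ℂ Q U)
    (hr : 0 ≤ r) (hsub : sphere c r ⊆ U) :
    (∮ z in C(c, r), u z * deriv Q z) - (∮ z in C(c, r), v z * deriv P z) =
      (∮ z in C(c, r), u z * deriv v z) + (∮ z in C(c, r), P z * deriv Q z) -
        ∮ z in C(c, r), (u z - P z) * deriv (fun z => v z - Q z) z := by
  have hexpand : (∮ z in C(c, r), (u z - P z) * deriv (fun z => v z - Q z) z) =
      (∮ z in C(c, r), u z * deriv v z) - (∮ z in C(c, r), u z * deriv Q z) -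
        (∮ z in C(c, r), P z * deriv v z) + ∮ z in C(c, r), P z * deriv Q z := by
    have hpointwise : EqOn (fun z => (u z - P z) * deriv (fun z => v z - Q z) z)
        (fun z => u z * deriv v z - u z * deriv Q z - P z * deriv v z + P z * deriv Q z)
        (sphere c r) := fun z hz => by
      have hz' := hU.mem_nhds (hsub hz)
      simp only [deriv_fun_sub (hv.differentiableAt hz') (hQ.differentiableAt hz')]
      ring
    have huv := circleIntegrable_mul_deriv hU hu hv hr hsub
    have huQ := circleIntegrable_mul_deriv hU hu hQ hr hsub
    have hPv := circleIntegrable_mul_deriv hU hP hv hr hsub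
    have hPQ := circleIntegrable_mul_deriv hU hP hQ hr hsub
    rw [circleIntegral.integral_congr hr hpointwise,
      circleIntegral.integral_add ((huv.fun_sub huQ).fun_sub hPv) hPQ,
      circleIntegral.integral_sub (huv.fun_sub huQ) hPv, circleIntegral.integral_sub huv huQ]
  rw [hexpand, circleIntegral_mul_deriv_eq_neg hU hP hv hr hsub]
  ring

end SphereInOpen

theorem tendsto_mul_deriv_cobounded {R : ℝ} {g : ℂ → ℂ}
    (hg : DifferentiableOn ℂ g {p | R < ‖p‖}) (hg₀ : Tendsto g (cobounded ℂ) (𝓝 0)) :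
    Tendsto (fun z => z * deriv g z) (cobounded ℂ) (𝓝 0) := by
  rw [hasBasis_cobounded_norm.tendsto_iff nhds_basis_closedBall] at hg₀ ⊢
  intro ε hε
  obtain ⟨M, -, hM⟩ := hg₀ (ε / 2) (half_pos hε)
  refine ⟨max (2 * M) (2 * |R| + 1), trivial, fun z hz => ?_⟩
  obtain ⟨hzM, hzR⟩ : 2 * M ≤ ‖z‖ ∧ 2 * |R| + 1 ≤ ‖z‖ := max_le_iff.1 hz
  have hz₀ : 0 < ‖z‖ := by linarith [abs_nonneg R]
  have hρ : 0 < ‖z‖ / 2 := half_pos hz₀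
  have hball : ∀ w ∈ closedBall z (‖z‖ / 2), ‖z‖ / 2 ≤ ‖w‖ := fun w hw => by
    have := norm_sub_norm_le z w
    rw [mem_closedBall, dist_eq_norm, norm_sub_rev] at hw
    linarith
  have hdiff : DiffContOnCl ℂ g (ball z (‖z‖ / 2)) := by
    refine (hg.mono ?_).diffContOnCl
    rw [closure_ball z hρ.ne']
    exact fun w hw => lt_of_lt_of_le (by linarith [le_abs_self R]) (hball w hw)
  have hbound := Complex.norm_deriv_le_of_forall_mem_sphere_norm_le hρ hdiff fun w hw => by
    simpa using hM w (show M ≤ ‖w‖ by linarith [hball w (sphere_subset_closedBall hw)])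
  rw [mem_closedBall, dist_zero_right, norm_mul]
  calc ‖z‖ * ‖deriv g z‖ ≤ ‖z‖ * (ε / 2 / (‖z‖ / 2)) := by gcongr
    _ = ε := by field_simp [hz₀.ne']

theorem tendsto_circleIntegral_atTop_of_tendsto_mul {F : ℂ → ℂ}
    (hF : Tendsto (fun z => z * F z) (cobounded ℂ) (𝓝 0)) :
    Tendsto (fun r : ℝ => ∮ z in C(0, r), F z) atTop (𝓝 0) := by
  rw [hasBasis_cobounded_norm.tendsto_iff nhds_basis_closedBall] at hF
  rw [atTop_basis.tendsto_iff nhds_basis_closedBall]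
  intro ε hε
  obtain ⟨M, -, hM⟩ := hF (ε / (2 * Real.pi)) (by positivity)
  refine ⟨max M 1, trivial, fun r hr => ?_⟩
  simp only [mem_Ici, max_le_iff] at hr
  have hr₀ : 0 < r := by linarith
  have hbound : ∀ z ∈ sphere (0 : ℂ) r, ‖F z‖ ≤ ε / (2 * Real.pi) / r := fun z hz => by
    rw [mem_sphere_zero_iff_norm] at hz
    have := hM z (by simp [hz, hr.1])
    rw [mem_closedBall, dist_zero_right, norm_mul, hz] at this
    rw [le_div_iff₀ hr₀]
    linarith
  rw [mem_closedBall, dist_zero_right]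
  calc ‖∮ z in C(0, r), F z‖ ≤ 2 * Real.pi * r * (ε / (2 * Real.pi) / r) :=
        circleIntegral.norm_integral_le_of_norm_le_const hr₀.le hbound
    _ = ε := by field_simp

theorem circleIntegral_eq_of_differentiableOn_norm_gt {E : Type*} [NormedAddCommGroup E]
    [NormedSpace ℂ E] {R r₁ r₂ : ℝ} {f : ℂ → E} (hR : 0 ≤ R)
    (hf : DifferentiableOn ℂ f {p | R < ‖p‖}) (h₁ : R < r₁) (h₁₂ : r₁ ≤ r₂) :
    (∮ z in C(0, r₂), f z) = ∮ z in C(0, r₁), f z := by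
  have hannulus : closedBall (0 : ℂ) r₂ \ ball 0 r₁ ⊆ {p | R < ‖p‖} := fun z hz => by
    simp only [Set.mem_sdiff, mem_closedBall, mem_ball, dist_zero_right, not_lt] at hz
    exact h₁.trans_le hz.2
  refine Complex.circleIntegral_eq_of_differentiable_on_annulus_off_countable (hR.trans_lt h₁)
    h₁₂ countable_empty (hf.continuousOn.mono hannulus) fun z hz => ?_
  refine hf.differentiableAt ((isOpen_lt continuous_const continuous_norm).mem_nhds ?_)
  exact hannulus ⟨ball_subset_closedBall hz.1.1, fun h => hz.1.2 (ball_subset_closedBall h)⟩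

theorem circleIntegral_mul_deriv_eq_zero_of_tendsto_zero {R r : ℝ} {f g : ℂ → ℂ} (hR : 0 ≤ R)
    (hf : DifferentiableOn ℂ f {p | R < ‖p‖}) (hg : DifferentiableOn ℂ g {p | R < ‖p‖})
    (hf₀ : Tendsto f (cobounded ℂ) (𝓝 0)) (hg₀ : Tendsto g (cobounded ℂ) (𝓝 0)) (hr : R < r) :
    (∮ z in C(0, r), f z * deriv g z) = 0 := by
  have hU : IsOpen {p : ℂ | R < ‖p‖} := isOpen_lt continuous_const continuous_norm
  have hconst : (fun s => ∮ z in C(0, s), f z * deriv g z) =ᶠ[atTop]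
      fun _ => ∮ z in C(0, r), f z * deriv g z :=
    (eventually_ge_atTop r).mono fun s hs =>
      circleIntegral_eq_of_differentiableOn_norm_gt hR (hf.mul (hg.deriv hU)) hr hs
  have hlim : Tendsto (fun s => ∮ z in C(0, s), f z * deriv g z) atTop (𝓝 0) := by
    refine tendsto_circleIntegral_atTop_of_tendsto_mul ?_
    simpa [mul_left_comm] using hf₀.mul (tendsto_mul_deriv_cobounded hg hg₀)
  exact tendsto_const_nhds_iff.1 (hlim.congr' hconst)

theorem residue_symmetry_general (R : ℝ) (hR : 0 < R) (k : ℂ → ℂ)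
    (hk_hol : DifferentiableOn ℂ k {p : ℂ | R < ‖p‖})
    (i j : ℕ)
    (Ωi Ωj : Polynomial ℂ)
    (hΩi : Tendsto (fun p : ℂ => k p ^ i - Ωi.eval p)
      (comap (fun p : ℂ => ‖p‖) atTop) (nhds 0))
    (hΩj : Tendsto (fun p : ℂ => k p ^ j - Ωj.eval p)
      (comap (fun p : ℂ => ‖p‖) atTop) (nhds 0)) :
    ∀ r : ℝ, R < r →
      (∮ p in C(0, r), k p ^ i * Ωj.derivative.eval p)
        = ∮ p in C(0, r), k p ^ j * Ωi.derivative.eval p := by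
  intro r hr
  have hU : IsOpen {p : ℂ | R < ‖p‖} := isOpen_lt continuous_const continuous_norm
  have hr₀ : 0 ≤ r := (hR.trans hr).le
  have hsub : sphere (0 : ℂ) r ⊆ {p | R < ‖p‖} := fun z hz => by
    rwa [mem_ofPred_eq, mem_sphere_zero_iff_norm.1 hz]
  have hpow (n : ℕ) : DifferentiableOn ℂ (fun p => k p ^ n) {p | R < ‖p‖} := hk_hol.pow n
  have hpoly (P : ℂ[X]) : DifferentiableOn ℂ (fun p => P.eval p) {p | R < ‖p‖} :=
    P.differentiable.differentiableOn
  have hentire : (∮ z in C(0, r), Ωi.eval z * deriv (fun p => Ωj.eval p) z) = 0 := by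
    simpa [Polynomial.deriv] using
      (Ωi * Ωj.derivative).differentiable.diffContOnCl.circleIntegral_eq_zero (c := 0) hr₀
  rw [comap_norm_atTop] at hΩi hΩj
  simp only [← Polynomial.deriv]
  rw [← sub_eq_zero, circleIntegral_mul_deriv_sub_mul_deriv hU (hpow i) (hpow j) (hpoly Ωi)
    (hpoly Ωj) hr₀ hsub, circleIntegral_pow_mul_deriv_pow_eq_zero hU hk_hol hr₀ hsub, hentire,
    circleIntegral_mul_deriv_eq_zero_of_tendsto_zero hR.le ((hpow i).fun_sub (hpoly Ωi))
      ((hpow j).fun_sub (hpoly Ωj)) hΩi hΩj hr]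
  simp

/-- the symmetry `res_∞ κ^i dΩ_j = res_∞ κ^j dΩ_i`.  Here `k` is
holomorphic on `|p| > R` with `k(p) − p → 0` at infinity and `Ω_i`, `Ω_j` are the
polynomial parts of `k^i`, `k^j` at infinity (i.e. `k^i − Ω_i → 0`, `k^j − Ω_j → 0`);
then the circle integrals of `k^i Ω_j'` and `k^j Ω_i'` over any circle `|p| = r`,
`r > R`, agree. -/
theorem residue_symmetry (R : ℝ) (hR : 0 < R) (k : ℂ → ℂ)
    (hk_hol : DifferentiableOn ℂ k {p : ℂ | R < ‖p‖})
    (hk_asym : Tendsto (fun p : ℂ => k p - p)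
      (comap (fun p : ℂ => ‖p‖) atTop) (nhds 0))
    (i j : ℕ) (hi : 1 ≤ i) (hj : 1 ≤ j)
    (Ωi Ωj : Polynomial ℂ)
    (hΩi : Tendsto (fun p : ℂ => k p ^ i - Ωi.eval p)
      (comap (fun p : ℂ => ‖p‖) atTop) (nhds 0))
    (hΩj : Tendsto (fun p : ℂ => k p ^ j - Ωj.eval p)
      (comap (fun p : ℂ => ‖p‖) atTop) (nhds 0)) :
    ∀ r : ℝ, R < r →
      (∮ p in C(0, r), k p ^ i * Ωj.derivative.eval p)
        = ∮ p in C(0, r), k p ^ j * Ωi.derivative.eval p :=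
  residue_symmetry_general R hR k hk_hol i j Ωi Ωj hΩi hΩj
end

section
/- Let n ≥ 1, let i, j be integers with 1 ≤ i, j ≤ n, and let ε₁, ε₂ ∈ {1, I} ⊆ ℂ, where I is the imaginary unit. Let ρ > 0 and let a, b, c : {z ∈ ℂ : |z| < ρ} → ℂ be holomorphic. Define, on the punctured disc 0 < |z| < ρ, f(z) = ε₁ z^{−i} + a(z), g(z) = ε₂ z^{−j} + b(z), E(z) = z^{−n} + c(z). Let 0 < r < ρ be such that E'(z) ≠ 0 for all z with 0 < |z| ≤ r. Then Re( −(2πI)^{−1} ∮_{|z|=r} f'(z)·g'(z)/(I·E'(z)) dz ) equals i·j/n if i + j = n and ε₁·ε₂ = I, and equals 0 otherwise. Here ∮_{|z|=r} denotes the circle integral over the circle of radius r centered at 0 and ' denotes the complex derivative. -/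
/-!
Put `φ = z^(n+1) E' = -n + z^(n+1) c'`: it is holomorphic on the disc and does not vanish on
`|z| ≤ r` (at `0` it equals `-n`). Multiplying out `f' g' / (I E') = z^(n+1) f' g' / (I φ)`, the
integrand is the monomial `-(ij/n)(ε₁ε₂/I) z^(n-i-j-1)` plus a function holomorphic on the closed
disc, because every other term carries one of the non-negative powers `z^(n-i)`, `z^(n-j)`,
`z^(n+1)`, `z^(2n-i-j)`. By Cauchy's theorem only the monomial contributes, and only when
`n-i-j-1 = -1`. Finally `Re(ε₁ε₂/I)` is `1` for `ε₁ε₂ = I` and `0` for `ε₁ε₂ = ±1`.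
-/

open Complex Metric Real Set Topology

theorem deriv_eq_of_eq_zpow_neg_add_on_ball {e : ℂ} {m : ℕ} {ρ : ℝ} {u F : ℂ → ℂ}
    (hu : DifferentiableOn ℂ u (ball 0 ρ))
    (hF : ∀ w : ℂ, w ≠ 0 → ‖w‖ < ρ → F w = e * w ^ (-(m : ℤ)) + u w)
    {z : ℂ} (hz : z ≠ 0) (hzρ : ‖z‖ < ρ) :
    deriv F z = e * -m * z ^ (-(m : ℤ) - 1) + deriv u z := by
  have hzball : z ∈ ball (0 : ℂ) ρ := mem_ball_zero_iff.mpr hzρ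
  have hF_nhds : F =ᶠ[𝓝 z] fun w => e * w ^ (-(m : ℤ)) + u w := by
    filter_upwards [isOpen_ball.mem_nhds hzball, isOpen_ne.mem_nhds hz] with w hwρ hw
    exact hF w hw (mem_ball_zero_iff.mp hwρ)
  have hpow : DifferentiableAt ℂ (fun w : ℂ => w ^ (-(m : ℤ))) z :=
    differentiableAt_zpow.mpr (Or.inl hz)
  rw [hF_nhds.deriv_eq, deriv_fun_add (hpow.const_mul e) (hu.differentiableAt
    (isOpen_ball.mem_nhds hzball)), deriv_const_mul _ hpow, deriv_zpow]
  push_cast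
  ring

theorem neg_add_pow_succ_mul_ne_zero {n : ℕ} (hn : n ≠ 0) {r : ℝ} {C E' : ℂ → ℂ}
    (hE' : ∀ z : ℂ, z ≠ 0 → ‖z‖ ≤ r → E' z = 1 * -n * z ^ (-(n : ℤ) - 1) + C z)
    (hE'_ne : ∀ z : ℂ, z ≠ 0 → ‖z‖ ≤ r → E' z ≠ 0) :
    ∀ z ∈ closedBall (0 : ℂ) r, -(n : ℂ) + z ^ (n + 1) * C z ≠ 0 := by
  intro z hz
  rcases eq_or_ne z 0 with rfl | hz0
  · simpa using hn
  have hzr : ‖z‖ ≤ r := mem_closedBall_zero_iff.mp hz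
  have hφ : -(n : ℂ) + z ^ (n + 1) * C z = z ^ (n + 1) * E' z := by
    rw [hE' z hz0 hzr, show -(n : ℤ) - 1 = -((n + 1 : ℕ) : ℤ) by push_cast; ring, zpow_neg,
      zpow_natCast]
    field_simp
  rw [hφ]
  exact mul_ne_zero (pow_ne_zero _ hz0) (hE'_ne z hz0 hzr)

theorem div_eq_laurent_add {𝕜 : Type*} [Field 𝕜] {i j n e₁ e₂ κ A B C P Q T : 𝕜}
    (hκ : κ ≠ 0) (hn : n ≠ 0) (hT : T ≠ 0) (hφ : -n + T * C ≠ 0) :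
    (e₁ * -i * P + A) * (e₂ * -j * Q + B) / (κ * (-n * T⁻¹ + C)) =
      -(i * j / n * (e₁ * e₂ / κ)) * (T * P * Q) +
        (n * i * e₁ * (T * P) * B + n * j * e₂ * (T * Q) * A - n * T * A * B
          - i * j * e₁ * e₂ * (T * T * P * Q) * C) / (κ * -n * (-n + T * C)) := by
  have hden : -n * T⁻¹ + C = T⁻¹ * (-n + T * C) := by field_simp
  rw [hden]
  field_simp
  ring

/-- The part of `f' g' / (I E')` that is holomorphic at the puncture, where `A`, `B`, `C` stand
for the values of `a'`, `b'`, `c'` at `z`. -/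
noncomputable def pairingRegularPart (n i j : ℕ) (e₁ e₂ A B C z : ℂ) : ℂ :=
  (n * i * e₁ * z ^ (n - i) * B + n * j * e₂ * z ^ (n - j) * A - n * z ^ (n + 1) * A * B
    - i * j * e₁ * e₂ * z ^ (2 * n - (i + j)) * C) / (I * -n * (-n + z ^ (n + 1) * C))

theorem differentiableOn_pairingRegularPart (n i j : ℕ) (e₁ e₂ : ℂ) {A B C : ℂ → ℂ}
    {s : Set ℂ} (hA : DifferentiableOn ℂ A s) (hB : DifferentiableOn ℂ B s)
    (hC : DifferentiableOn ℂ C s) (hφ : ∀ z ∈ s, -(n : ℂ) + z ^ (n + 1) * C z ≠ 0)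
    (hn : n ≠ 0) :
    DifferentiableOn ℂ (fun z => pairingRegularPart n i j e₁ e₂ (A z) (B z) (C z) z) s := by
  unfold pairingRegularPart
  apply DifferentiableOn.div
  · fun_prop
  · fun_prop
  intro z hz
  exact mul_ne_zero (mul_ne_zero I_ne_zero (neg_ne_zero.mpr (Nat.cast_ne_zero.mpr hn))) (hφ z hz)

theorem pairing_integrand_eq_monomial_add_regularPart {n i j : ℕ} (hin : i ≤ n) (hjn : j ≤ n)
    (hn : n ≠ 0) {e₁ e₂ A B C z : ℂ} (hz : z ≠ 0) (hφ : -n + z ^ (n + 1) * C ≠ 0) :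
    (e₁ * -i * z ^ (-(i : ℤ) - 1) + A) * (e₂ * -j * z ^ (-(j : ℤ) - 1) + B)
        / (I * (1 * -n * z ^ (-(n : ℤ) - 1) + C)) =
      -(i * j / n * (e₁ * e₂ / I)) * z ^ ((n : ℤ) - i - j - 1)
        + pairingRegularPart n i j e₁ e₂ A B C z := by
  have hTinv : z ^ (-(n : ℤ) - 1) = (z ^ (n + 1))⁻¹ := by
    rw [← zpow_natCast, ← zpow_neg]; push_cast; ring_nf
  have hTPQ : z ^ ((n : ℤ) - i - j - 1) =
      z ^ (n + 1) * z ^ (-(i : ℤ) - 1) * z ^ (-(j : ℤ) - 1) := by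
    rw [← zpow_natCast, ← zpow_add₀ hz, ← zpow_add₀ hz]; push_cast; ring_nf
  have hTP : z ^ (n - i) = z ^ (n + 1) * z ^ (-(i : ℤ) - 1) := by
    rw [← zpow_natCast, ← zpow_natCast, ← zpow_add₀ hz]; congr 1; omega
  have hTQ : z ^ (n - j) = z ^ (n + 1) * z ^ (-(j : ℤ) - 1) := by
    rw [← zpow_natCast, ← zpow_natCast, ← zpow_add₀ hz]; congr 1; omega
  have hTTPQ : z ^ (2 * n - (i + j)) =
      z ^ (n + 1) * z ^ (n + 1) * z ^ (-(i : ℤ) - 1) * z ^ (-(j : ℤ) - 1) := by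
    rw [← zpow_natCast, ← zpow_natCast, ← zpow_add₀ hz, ← zpow_add₀ hz, ← zpow_add₀ hz]
    congr 1; omega
  rw [one_mul, hTinv, hTPQ, pairingRegularPart, hTP, hTQ, hTTPQ]
  exact div_eq_laurent_add I_ne_zero (Nat.cast_ne_zero.mpr hn) (pow_ne_zero _ hz) hφ

theorem circleIntegral_zpow {R : ℝ} (hR : 0 < R) (k : ℤ) :
    (∮ z in C(0, R), z ^ k) = if k = -1 then 2 * π * I else 0 := by
  split_ifs with hk
  · subst hk
    simpa using circleIntegral.integral_sub_inv_of_mem_ball (mem_ball_self (x := (0 : ℂ)) hR)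
  · simpa using circleIntegral.integral_sub_zpow_of_ne hk 0 0 R

theorem circleIntegral_const_mul_zpow_add {R : ℝ} (hR : 0 < R) (K : ℂ) (k : ℤ) {G : ℂ → ℂ}
    (hG : DifferentiableOn ℂ G (closedBall 0 R)) :
    (∮ z in C(0, R), (K * z ^ k + G z)) = if k = -1 then 2 * π * I * K else 0 := by
  have hzpow : CircleIntegrable (fun z : ℂ => K * z ^ k) 0 R := by
    refine (continuousOn_const.mul fun z hz => ?_).circleIntegrable hR.le
    refine (continuousAt_zpow₀ z k (Or.inl ?_)).continuousWithinAt
    rintro rfl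
    exact hR.ne (by simpa using hz)
  rw [circleIntegral.integral_add hzpow (hG.continuousOn.mono sphere_subset_closedBall
      |>.circleIntegrable hR.le), circleIntegral.integral_const_mul, circleIntegral_zpow hR,
    (hG.diffContOnCl_ball subset_rfl).circleIntegral_eq_zero hR.le]
  split_ifs <;> ring

theorem re_mul_div_I_of_mem {ε₁ ε₂ : ℂ} (h₁ : ε₁ ∈ ({1, I} : Set ℂ))
    (h₂ : ε₂ ∈ ({1, I} : Set ℂ)) :
    (ε₁ * ε₂ / I).re = if ε₁ * ε₂ = I then 1 else 0 := by
  rcases h₁ with rfl | rfl <;> rcases h₂ with rfl | rfl <;> simp [Complex.ext_iff]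

theorem real_normalized_flat_pairing_general (n i j : ℕ) (hn : 1 ≤ n)
    (hin : i ≤ n) (hjn : j ≤ n)
    (ε₁ ε₂ : ℂ) (hε₁ : ε₁ ∈ ({1, Complex.I} : Set ℂ))
    (hε₂ : ε₂ ∈ ({1, Complex.I} : Set ℂ))
    (ρ : ℝ)
    (a b c : ℂ → ℂ)
    (ha : DifferentiableOn ℂ a (Metric.ball (0 : ℂ) ρ))
    (hb : DifferentiableOn ℂ b (Metric.ball (0 : ℂ) ρ))
    (hc : DifferentiableOn ℂ c (Metric.ball (0 : ℂ) ρ))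
    (f g E : ℂ → ℂ)
    (hf : ∀ z : ℂ, z ≠ 0 → ‖z‖ < ρ → f z = ε₁ * z ^ (-(i : ℤ)) + a z)
    (hg : ∀ z : ℂ, z ≠ 0 → ‖z‖ < ρ → g z = ε₂ * z ^ (-(j : ℤ)) + b z)
    (hE : ∀ z : ℂ, z ≠ 0 → ‖z‖ < ρ → E z = z ^ (-(n : ℤ)) + c z)
    (r : ℝ) (hr0 : 0 < r) (hrρ : r < ρ)
    (hE' : ∀ z : ℂ, z ≠ 0 → ‖z‖ ≤ r → deriv E z ≠ 0) :
    (-(2 * Real.pi * Complex.I)⁻¹ *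
        (∮ z in C(0, r), deriv f z * deriv g z / (Complex.I * deriv E z))).re
      = if i + j = n ∧ ε₁ * ε₂ = Complex.I then (i * j : ℝ) / n else 0 := by
  have hn0 : n ≠ 0 := by omega
  have hdE (z : ℂ) (hz : z ≠ 0) (hzρ : ‖z‖ < ρ) := deriv_eq_of_eq_zpow_neg_add_on_ball (e := 1) hc
    (fun w hw hwρ => (hE w hw hwρ).trans (by rw [one_mul])) hz hzρ
  have hφ := neg_add_pow_succ_mul_ne_zero hn0 (fun z hz hzr => hdE z hz (hzr.trans_lt hrρ)) hE'
  have hderiv {u : ℂ → ℂ} (hu : DifferentiableOn ℂ u (ball 0 ρ)) :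
      DifferentiableOn ℂ (deriv u) (closedBall 0 r) :=
    (hu.analyticOnNhd isOpen_ball).deriv.differentiableOn.mono (closedBall_subset_ball hrρ)
  have hsplit : EqOn (fun z => deriv f z * deriv g z / (I * deriv E z))
      (fun z => -(i * j / n * (ε₁ * ε₂ / I)) * z ^ ((n : ℤ) - i - j - 1) +
        pairingRegularPart n i j ε₁ ε₂ (deriv a z) (deriv b z) (deriv c z) z) (sphere 0 r) := by
    intro z hz
    have hzr : ‖z‖ = r := mem_sphere_zero_iff_norm.mp hz
    have hz0 : z ≠ 0 := by rintro rfl; simp [hr0.ne] at hzr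
    have hzρ : ‖z‖ < ρ := hzr ▸ hrρ
    beta_reduce
    rw [deriv_eq_of_eq_zpow_neg_add_on_ball ha hf hz0 hzρ,
      deriv_eq_of_eq_zpow_neg_add_on_ball hb hg hz0 hzρ, hdE z hz0 hzρ]
    exact pairing_integrand_eq_monomial_add_regularPart hin hjn hn0 hz0
      (hφ z (sphere_subset_closedBall hz))
  rw [circleIntegral.integral_congr hr0.le hsplit, circleIntegral_const_mul_zpow_add hr0 _ _
    (differentiableOn_pairingRegularPart n i j ε₁ ε₂ (hderiv ha) (hderiv hb) (hderiv hc) hφ hn0)]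
  by_cases hij : i + j = n
  · have h2πI : (2 * π * I : ℂ) ≠ 0 := by simp [pi_ne_zero]
    rw [if_pos (by omega), neg_mul, inv_mul_cancel_left₀ h2πI, neg_neg,
      show (i * j / n : ℂ) = ((i * j / n : ℝ) : ℂ) by push_cast; ring, re_ofReal_mul,
      re_mul_div_I_of_mem hε₁ hε₂]
    simp [hij]
  · rw [if_neg (by omega), if_neg (by tauto)]
    simp

/-- the local flat-pairing computation for the reduced real-normalized
Whitham hierarchy.  Near the puncture, `f(z) = ε₁ z^{−i} + a(z)`,
`g(z) = ε₂ z^{−j} + b(z)`, `E(z) = z^{−n} + c(z)` with `a, b, c` holomorphic on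
`|z| < ρ` and `ε₁, ε₂ ∈ {1, I}`; then for a circle `|z| = r` with `E' ≠ 0` on
`0 < |z| ≤ r`, the real part of `−(2πI)⁻¹ ∮ f' g' / (I E')` equals `ij/n` if
`i + j = n` and `ε₁ ε₂ = I`, and `0` otherwise. -/
theorem real_normalized_flat_pairing (n i j : ℕ) (hn : 1 ≤ n)
    (hi1 : 1 ≤ i) (hin : i ≤ n) (hj1 : 1 ≤ j) (hjn : j ≤ n)
    (ε₁ ε₂ : ℂ) (hε₁ : ε₁ ∈ ({1, Complex.I} : Set ℂ))
    (hε₂ : ε₂ ∈ ({1, Complex.I} : Set ℂ))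
    (ρ : ℝ) (hρ : 0 < ρ)
    (a b c : ℂ → ℂ)
    (ha : DifferentiableOn ℂ a (Metric.ball (0 : ℂ) ρ))
    (hb : DifferentiableOn ℂ b (Metric.ball (0 : ℂ) ρ))
    (hc : DifferentiableOn ℂ c (Metric.ball (0 : ℂ) ρ))
    (f g E : ℂ → ℂ)
    (hf : ∀ z : ℂ, z ≠ 0 → ‖z‖ < ρ → f z = ε₁ * z ^ (-(i : ℤ)) + a z)
    (hg : ∀ z : ℂ, z ≠ 0 → ‖z‖ < ρ → g z = ε₂ * z ^ (-(j : ℤ)) + b z)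
    (hE : ∀ z : ℂ, z ≠ 0 → ‖z‖ < ρ → E z = z ^ (-(n : ℤ)) + c z)
    (r : ℝ) (hr0 : 0 < r) (hrρ : r < ρ)
    (hE' : ∀ z : ℂ, z ≠ 0 → ‖z‖ ≤ r → deriv E z ≠ 0) :
    (-(2 * Real.pi * Complex.I)⁻¹ *
        (∮ z in C(0, r), deriv f z * deriv g z / (Complex.I * deriv E z))).re
      = if i + j = n ∧ ε₁ * ε₂ = Complex.I then (i * j : ℝ) / n else 0 :=
  real_normalized_flat_pairing_general n i j hn hin hjn ε₁ ε₂ hε₁ hε₂ ρ a b c ha hb hc f g E hf hg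
    hE r hr0 hrρ hE'
end
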